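/- Let R be a commutative ring, s, t ∈ R. If an R-module C is an s-contramodule, then the cokernel Δ_t(C) of the map φ : Π_{n≥1} C → Π_{n≥0} C, (cₙ) ↦ (cₙ − t·cₙ₊₁) (with c₀ = 0), is again an s-contramodule. -/

import Mathlib

open CategoryTheory Opposite

/-!
The telescope `0 → R^(ℕ) → R^(ℕ) → R[s⁻¹] → 0`, with `eₙ ↦ eₙ - s·eₙ₊₁` followed by
`eₙ ↦ s⁻ⁿ`, is a projective resolution of `R[s⁻¹]`. Applying `Hom(-, M)` identifies
`Hom(R[s⁻¹], M)` and `Ext¹(R[s⁻¹], M)` with the kernel and the cokernel of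
`δ_M : M^ℕ → M^ℕ`, `(xₙ) ↦ (xₙ - s·xₙ₊₁)`, so `M` is an `s`-contramodule exactly when `δ_M` is
bijective. Since `δ` acts coordinatewise and commutes with linear maps, bijectivity passes to
products, and a diagram chase passes it to the cokernel of any map into a module with bijective
`δ` from a module with surjective `δ`.
-/

universe u

/-- The map `φ : Π_{n≥1} C → Π_{n≥0} C` sending `(c₁, c₂, …)` to `(cₙ - t·cₙ₊₁)ₙ` (with
`c₀ = 0`); its cokernel is `Δ_t(C)`. Here `c : ℕ → C` represents `(c₁, c₂, …)`. -/
def phiMap (R : Type) [CommRing R] (C : Type) [AddCommGroup C] [Module R C] (t : R) :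
    (ℕ → C) →ₗ[R] (ℕ → C) where
  toFun c := fun n => (if n = 0 then 0 else c (n - 1)) - t • c n
  map_add' c d := by
    funext n
    by_cases h : n = 0 <;> simp [h, smul_add] <;> abel
  map_smul' r c := by
    funext n
    by_cases h : n = 0 <;> simp [h, smul_sub, smul_comm r t]

namespace CategoryTheory.ShortComplex

open Limits ZeroObject

variable {C : Type*} [Category C] [Abelian C] (S : ShortComplex C)

noncomputable def resolutionX : ℕ → C
  | 0 => S.X₂
  | 1 => S.X₁
  | _ + 2 => 0

noncomputable def resolutionD : ∀ n, S.resolutionX (n + 1) ⟶ S.resolutionX n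
  | 0 => S.f
  | _ + 1 => 0

noncomputable def resolutionComplex : ChainComplex C ℕ :=
  ChainComplex.of S.resolutionX S.resolutionD fun _ => zero_comp

lemma resolutionComplex_d_one_zero : S.resolutionComplex.d 1 0 = S.f :=
  ChainComplex.of_d S.resolutionX S.resolutionD 0

lemma isZero_resolutionComplex_X (n : ℕ) : IsZero (S.resolutionComplex.X (n + 2)) :=
  isZero_zero C

noncomputable def resolutionπ : S.resolutionComplex ⟶ (ChainComplex.single₀ C).obj S.X₃ :=
  (ChainComplex.toSingle₀Equiv _ _).symm ⟨S.g, by rw [resolutionComplex_d_one_zero]; exact S.zero⟩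

lemma resolutionπ_f_zero : S.resolutionπ.f 0 = S.g :=
  ChainComplex.toSingle₀Equiv_symm_apply_f_zero _ _

variable {S}

lemma quasiIso_resolutionπ (hS : S.ShortExact) : _root_.QuasiIso S.resolutionπ where
  quasiIsoAt
  | 0 => by
      rw [ChainComplex.quasiIsoAt₀_iff, ShortComplex.quasiIso_iff_of_zeros' _
        (S.resolutionComplex.shape 0 0 (by simp))
        ((HomologicalComplex.isZero_single_obj_X (ComplexShape.down ℕ) 0 S.X₃ 1
          (by simp)).eq_of_src _ _)
        (((ChainComplex.single₀ C).obj S.X₃).shape 0 0 (by simp))]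
      constructor
      · refine ShortComplex.exact_of_iso (ShortComplex.isoMk (Iso.refl S.X₁) (Iso.refl S.X₂)
          (Iso.refl S.X₃) ?_ ?_) hS.exact
        · exact (Category.id_comp _).trans
            (S.resolutionComplex_d_one_zero.trans (Category.comp_id _).symm)
        · exact (Category.id_comp _).trans (S.resolutionπ_f_zero.trans (Category.comp_id _).symm)
      · show Epi (S.resolutionπ.f 0)
        rw [resolutionπ_f_zero]
        exact hS.epi_g
  | 1 => by
      rw [quasiIsoAt_iff_exactAt' _ _ (ChainComplex.exactAt_succ_single_obj _ _),
        HomologicalComplex.exactAt_iff' _ 2 1 0 (by simp) (by simp),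
        ShortComplex.exact_iff_mono _ ((S.isZero_resolutionComplex_X 0).eq_of_src _ _)]
      show Mono (S.resolutionComplex.d 1 0)
      rw [resolutionComplex_d_one_zero]
      exact hS.mono_f
  | n + 2 => by
      rw [quasiIsoAt_iff_exactAt' _ _ (ChainComplex.exactAt_succ_single_obj _ _)]
      exact ShortComplex.exact_of_isZero_X₂ _ (S.isZero_resolutionComplex_X n)

noncomputable def ShortExact.projectiveResolution (hS : S.ShortExact) [Projective S.X₁]
    [Projective S.X₂] : ProjectiveResolution S.X₃ where
  complex := S.resolutionComplex
  projective
  | 0 => ‹Projective S.X₂›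
  | 1 => ‹Projective S.X₁›
  | _ + 2 => Projective.zero_projective
  π := S.resolutionπ
  quasiIso := quasiIso_resolutionπ hS

lemma ShortExact.isZero_ext_one_iff (R : Type*) [Ring R] [Linear R C] [EnoughProjectives C]
    (hS : S.ShortExact) [Projective S.X₁] [Projective S.X₂] (Y : C) :
    IsZero (((Ext R C 1).obj (Opposite.op S.X₃)).obj Y) ↔
      Function.Surjective fun φ : S.X₂ ⟶ Y => S.f ≫ φ := by
  rw [((hS.projectiveResolution).isoExt 1 Y).isZero_iff,
    ← HomologicalComplex.exactAt_iff_isZero_homology,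
    HomologicalComplex.exactAt_iff' _ 0 1 2 (by simp) (by simp),
    ShortComplex.moduleCat_exact_iff]
  have hg (φ : S.resolutionComplex.X 1 ⟶ Y) :
      ((hS.projectiveResolution.complex.linearYonedaObj R Y).sc' 0 1 2).g φ = 0 :=
    (S.isZero_resolutionComplex_X 0).eq_of_src _ _
  have hf (φ : S.X₂ ⟶ Y) :
      ((hS.projectiveResolution.complex.linearYonedaObj R Y).sc' 0 1 2).f φ = S.f ≫ φ := by
    show S.resolutionComplex.d 1 0 ≫ φ = _
    rw [resolutionComplex_d_one_zero]
    rfl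
  refine ⟨fun h φ => ?_, fun h φ _ => ?_⟩
  · obtain ⟨ψ, hψ⟩ := h φ (hg φ)
    exact ⟨ψ, (hf ψ).symm.trans hψ⟩
  · obtain ⟨ψ, hψ⟩ := h φ
    exact ⟨ψ, (hf ψ).trans hψ⟩

end CategoryTheory.ShortComplex

section Telescope

variable {R : Type u} [CommRing R] (s : R)

noncomputable def telescope : (ℕ →₀ R) →ₗ[R] (ℕ →₀ R) :=
  LinearMap.id - s • Finsupp.lmapDomain R R (· + 1)

lemma telescope_single (n : ℕ) (r : R) :
    telescope s (Finsupp.single n r) = Finsupp.single n r - Finsupp.single (n + 1) (s * r) := by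
  simp [telescope, Finsupp.mapDomain_single]

lemma telescope_apply_zero (a : ℕ →₀ R) : telescope s a 0 = a 0 := by
  simp [telescope, Finsupp.mapDomain_of_notMem_range _ _ (by simp : (0 : ℕ) ∉ Set.range (· + 1))]

lemma telescope_apply_succ (a : ℕ →₀ R) (n : ℕ) :
    telescope s a (n + 1) = a (n + 1) - s * a n := by
  simp [telescope, Finsupp.mapDomain_apply (add_left_injective 1)]

lemma telescope_injective : Function.Injective (telescope s) := by
  rw [injective_iff_map_eq_zero]
  intro a ha
  ext n
  induction n with
  | zero => simpa [telescope_apply_zero] using congr($ha 0)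
  | succ n ih => simpa [telescope_apply_succ, ih] using congr($ha (n + 1))

lemma single_sModEq_single_pow_mul (n k : ℕ) (r : R) :
    Finsupp.single n r ≡ Finsupp.single (n + k) (s ^ k * r)
      [SMOD LinearMap.range (telescope s)] := by
  induction k with
  | zero => simp [SModEq.refl]
  | succ k ih =>
    refine ih.trans (SModEq.sub_mem.2 ⟨Finsupp.single (n + k) (s ^ k * r), ?_⟩)
    rw [telescope_single, pow_succ', mul_assoc, add_assoc]

lemma exists_sModEq_single (a : ℕ →₀ R) :
    ∃ n r, a ≡ Finsupp.single n r [SMOD LinearMap.range (telescope s)] := by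
  induction a using Finsupp.induction_linear with
  | zero => exact ⟨0, 0, by simp [SModEq.refl]⟩
  | single n r => exact ⟨n, r, SModEq.refl _⟩
  | add a b ha hb =>
    obtain ⟨n, r, ha⟩ := ha
    obtain ⟨m, q, hb⟩ := hb
    refine ⟨n + m, s ^ m * r + s ^ n * q, ?_⟩
    rw [Finsupp.single_add]
    exact (ha.trans (single_sModEq_single_pow_mul s n m r)).add
      ((add_comm m n ▸ (hb.trans (single_sModEq_single_pow_mul s m n q))))

end Telescope

section Augmentation

open IsLocalization.Away

variable {R : Type u} [CommRing R] (s : R)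

noncomputable def telescopeAugmentation : (ℕ →₀ R) →ₗ[R] Localization.Away s :=
  Finsupp.linearCombination R fun n => invSelf s ^ n

lemma telescopeAugmentation_single (n : ℕ) (r : R) :
    telescopeAugmentation s (Finsupp.single n r) = r • invSelf s ^ n :=
  Finsupp.linearCombination_single R r n

lemma telescopeAugmentation_surjective : Function.Surjective (telescopeAugmentation s) := by
  intro z
  obtain ⟨n, a, h⟩ := surj s z
  refine ⟨Finsupp.single n a, ?_⟩
  rw [telescopeAugmentation_single, Algebra.smul_def, ← h, mul_assoc, ← mul_pow, mul_invSelf,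
    one_pow, mul_one]

lemma telescopeAugmentation_comp_telescope : telescopeAugmentation s ∘ₗ telescope s = 0 := by
  refine Finsupp.lhom_ext fun n r => ?_
  simp only [LinearMap.comp_apply, telescope_single, map_sub, telescopeAugmentation_single,
    LinearMap.zero_apply, Algebra.smul_def, map_mul, pow_succ]
  linear_combination -(algebraMap R _ r * invSelf (S := Localization.Away s) s ^ n) *
    mul_invSelf (S := Localization.Away s) s

lemma exact_telescope_telescopeAugmentation :
    Function.Exact (telescope s) (telescopeAugmentation s) := by
  refine LinearMap.exact_iff.2 (le_antisymm (fun a ha => ?_)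
    (LinearMap.range_le_ker_iff.2 (telescopeAugmentation_comp_telescope s)))
  obtain ⟨n, r, har⟩ := exists_sModEq_single s a
  have hr : algebraMap R (Localization.Away s) r = 0 := by
    have h : telescopeAugmentation s (Finsupp.single n r) = 0 := by
      obtain ⟨b, hb⟩ := SModEq.sub_mem.1 har.symm
      rw [← ha, ← sub_eq_zero, ← map_sub, ← hb]
      exact LinearMap.congr_fun (telescopeAugmentation_comp_telescope s) b
    rw [telescopeAugmentation_single, Algebra.smul_def] at h
    calc algebraMap R (Localization.Away s) r
        = algebraMap R _ r * (invSelf s * algebraMap R _ s) ^ n := by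
          rw [mul_comm (invSelf s), mul_invSelf, one_pow, mul_one]
      _ = 0 := by rw [mul_pow, ← mul_assoc, h, zero_mul]
  obtain ⟨m, hm⟩ := exists_of_eq (x := s) (hr.trans (map_zero _).symm)
  rw [mul_zero] at hm
  have := har.trans (single_sModEq_single_pow_mul s n m r)
  rw [hm, Finsupp.single_zero] at this
  exact SModEq.zero.1 this

end Augmentation

section TelescopeDual

variable {R : Type u} [CommRing R] (s : R)

def telescopeDual (M : Type*) [AddCommGroup M] [Module R M] : (ℕ → M) →ₗ[R] (ℕ → M) where
  toFun x n := x n - s • x (n + 1)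
  map_add' x y := by ext n; simp only [Pi.add_apply, smul_add]; abel
  map_smul' r x := by ext n; simp only [Pi.smul_apply, smul_sub, smul_comm r s, RingHom.id_apply]

variable {s}

lemma telescopeDual_apply {M : Type*} [AddCommGroup M] [Module R M] (x : ℕ → M) (n : ℕ) :
    telescopeDual s M x n = x n - s • x (n + 1) := rfl

lemma lift_telescopeDual {M : Type*} [AddCommGroup M] [Module R M] (x : ℕ → M) :
    Finsupp.lift M R ℕ (telescopeDual s M x) = Finsupp.lift M R ℕ x ∘ₗ telescope s := by
  refine Finsupp.lhom_ext fun n r => ?_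
  simp only [LinearMap.comp_apply, telescope_single, map_sub, Finsupp.lift_apply,
    Finsupp.sum_single_index, zero_smul, sub_self, telescopeDual_apply, smul_sub, mul_smul,
    smul_comm r s]

lemma telescopeDual_compLeft {M N : Type*} [AddCommGroup M] [Module R M] [AddCommGroup N]
    [Module R N] (f : M →ₗ[R] N) :
    telescopeDual s N ∘ₗ f.compLeft ℕ = f.compLeft ℕ ∘ₗ telescopeDual s M := by
  ext x n
  simp [telescopeDual_apply]

lemma bijective_telescopeDual_pi {ι : Type*} {M : ι → Type*} [∀ i, AddCommGroup (M i)]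
    [∀ i, Module R (M i)] (h : ∀ i, Function.Bijective (telescopeDual s (M i))) :
    Function.Bijective (telescopeDual s (∀ i, M i)) := by
  have : ⇑(telescopeDual s (∀ i, M i)) =
      (Equiv.piComm _).symm ∘ Pi.map (fun i => telescopeDual s (M i)) ∘ Equiv.piComm _ := rfl
  rw [this]
  exact (Equiv.bijective _).comp ((Function.Bijective.piMap h).comp (Equiv.bijective _))

lemma bijective_telescopeDual_quotient_range {M N : Type*} [AddCommGroup M] [Module R M]
    [AddCommGroup N] [Module R N] (φ : N →ₗ[R] M) (hN : Function.Surjective (telescopeDual s N))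
    (hM : Function.Bijective (telescopeDual s M)) :
    Function.Bijective (telescopeDual s (M ⧸ LinearMap.range φ)) := by
  set π := (LinearMap.range φ).mkQ
  have hπ : Function.Surjective (π.compLeft ℕ) := (Submodule.mkQ_surjective _).comp_left
  have hnat := LinearMap.congr_fun (telescopeDual_compLeft (s := s) π)
  refine ⟨(injective_iff_map_eq_zero _).2 fun y hy => ?_, fun y => ?_⟩
  · obtain ⟨x, rfl⟩ := hπ y
    have hδx (n : ℕ) : telescopeDual s M x n ∈ LinearMap.range φ := by
      rw [← Submodule.Quotient.mk_eq_zero]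
      exact congrFun ((hnat x).symm.trans hy) n
    choose z hz using hδx
    obtain ⟨w, rfl⟩ := hN z
    have hx : φ.compLeft ℕ w = x := hM.1 <| by
      rw [← LinearMap.comp_apply, telescopeDual_compLeft, LinearMap.comp_apply]
      exact funext hz
    rw [← hx]
    exact funext fun n => (Submodule.Quotient.mk_eq_zero _).2 ⟨w n, rfl⟩
  · obtain ⟨x, rfl⟩ := hπ y
    obtain ⟨w, rfl⟩ := hM.2 x
    exact ⟨π.compLeft ℕ w, hnat w⟩

end TelescopeDual

section HomExt

variable {R : Type u} [CommRing R]

lemma Function.Exact.subsingleton_linearMap_iff_injective_lcomp {M₁ M₂ M₃ : Type*}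
    [AddCommGroup M₁] [AddCommGroup M₂] [AddCommGroup M₃] [Module R M₁] [Module R M₂]
    [Module R M₃] {f : M₁ →ₗ[R] M₂} {g : M₂ →ₗ[R] M₃} (hfg : Function.Exact f g)
    (hg : Function.Surjective g) (N : Type*) [AddCommGroup N] [Module R N] :
    Subsingleton (M₃ →ₗ[R] N) ↔ Function.Injective (LinearMap.lcomp R N f) := by
  rw [LinearMap.injective_iff_eq_zero_of_exact
    (LinearMap.exact_lcomp_of_exact_of_surjective N hfg hg)]
  refine ⟨fun _ => LinearMap.ext fun h => ?_,
    fun h0 => ⟨fun a b => LinearMap.lcomp_injective_of_surjective (S := R) g hg ?_⟩⟩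
  · rw [Subsingleton.elim h 0, map_zero, LinearMap.zero_apply]
  rw [h0, LinearMap.zero_apply, LinearMap.zero_apply]

lemma Function.Exact.subsingleton_ext_one_iff_surjective_lcomp {P₁ P₀ X : Type u}
    [AddCommGroup P₁] [AddCommGroup P₀] [AddCommGroup X] [Module R P₁] [Module R P₀] [Module R X]
    [Module.Projective R P₁] [Module.Projective R P₀] {f : P₁ →ₗ[R] P₀} {g : P₀ →ₗ[R] X}
    (hfg : Function.Exact f g) (hf : Function.Injective f) (hg : Function.Surjective g)
    (M : Type u) [AddCommGroup M] [Module R M] :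
    Subsingleton (((Ext R (ModuleCat R) 1).obj (op (ModuleCat.of R X))).obj (ModuleCat.of R M)) ↔
      Function.Surjective (LinearMap.lcomp R M f) := by
  let S := ShortComplex.moduleCatMk f g hfg.linearMap_comp_eq_zero
  have hS : S.ShortExact := ModuleCat.shortComplex_shortExact S hfg hf hg
  have : Projective S.X₁ := (IsProjective.iff_projective P₁).1 inferInstance
  have : Projective S.X₂ := (IsProjective.iff_projective P₀).1 inferInstance
  rw [← ModuleCat.isZero_iff_subsingleton]
  refine (hS.isZero_ext_one_iff R (ModuleCat.of R M)).trans ?_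
  have : (fun φ : S.X₂ ⟶ ModuleCat.of R M => S.f ≫ φ) =
      ModuleCat.homEquiv.symm ∘ LinearMap.lcomp R M f ∘ ModuleCat.homEquiv := rfl
  rw [this]
  exact (EquivLike.comp_surjective _ _).trans (EquivLike.surjective_comp _ _)

end HomExt

section Contramodule

variable {R : Type u} [CommRing R]

def IsContramodule (s : R) (M : Type u) [AddCommGroup M] [Module R M] : Prop :=
  Subsingleton (Localization.Away s →ₗ[R] M) ∧
    Subsingleton (((Ext R (ModuleCat R) 1).obj
      (op (ModuleCat.of R (Localization.Away s)))).obj (ModuleCat.of R M))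

theorem isContramodule_iff_bijective_telescopeDual (s : R) (M : Type u) [AddCommGroup M]
    [Module R M] : IsContramodule s M ↔ Function.Bijective (telescopeDual s M) := by
  have hex := exact_telescope_telescopeAugmentation s
  have hsurj := telescopeAugmentation_surjective s
  have hconj : LinearMap.lcomp R M (telescope s) ∘ Finsupp.lift M R ℕ =
      Finsupp.lift M R ℕ ∘ telescopeDual s M :=
    funext fun x => (lift_telescopeDual x).symm
  rw [IsContramodule, hex.subsingleton_linearMap_iff_injective_lcomp hsurj,
    hex.subsingleton_ext_one_iff_surjective_lcomp (telescope_injective s) hsurj,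
    ← EquivLike.injective_comp (Finsupp.lift M R ℕ), hconj, EquivLike.comp_injective,
    ← EquivLike.surjective_comp (Finsupp.lift M R ℕ), hconj, EquivLike.comp_surjective]
  rfl

end Contramodule

/-- Let `R` be a commutative ring and `s, t ∈ R`. If an `R`-module `C` is
an `s`-contramodule, then `Δ_t(C)`, the cokernel of `φ : Π_{n≥1} C → Π_{n≥0} C`,
`(cₙ) ↦ (cₙ - t·cₙ₊₁)` (with `c₀ = 0`), is again an `s`-contramodule. -/
theorem delta_t_of_contramodule_isContramodule
    (R : Type) [CommRing R] (s t : R) (C : Type) [AddCommGroup C] [Module R C]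
    (hC : Subsingleton (Localization.Away s →ₗ[R] C) ∧
      Subsingleton (((Ext R (ModuleCat R) 1).obj
        (op (ModuleCat.of R (Localization.Away s)))).obj (ModuleCat.of R C))) :
    Subsingleton (Localization.Away s →ₗ[R] ((ℕ → C) ⧸ LinearMap.range (phiMap R C t))) ∧
      Subsingleton (((Ext R (ModuleCat R) 1).obj
        (op (ModuleCat.of R (Localization.Away s)))).obj
        (ModuleCat.of R ((ℕ → C) ⧸ LinearMap.range (phiMap R C t)))) := by
  have hδ : Function.Bijective (telescopeDual s (ℕ → C)) :=
    bijective_telescopeDual_pi fun _ => (isContramodule_iff_bijective_telescopeDual s C).1 hC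
  exact (isContramodule_iff_bijective_telescopeDual s _).2
    (bijective_telescopeDual_quotient_range (phiMap R C t) hδ.2 hδ)
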